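/- arXiv:math/0605615 — 5 statements merged into one kernel-verified Lean document; each statement's English description precedes it below -/
import Mathlib

section
/- Let M_A be a Markov basis for A such that π₁(m) ∈ {−1, 0, +1} for every m ∈ M_A. Then for every t ∈ ℤ₊^r, the set π₁(A⁻¹[t]) of first coordinates of tables in A⁻¹[t] is an interval of integers. -/
open Matrix MvPolynomial

namespace SIS

variable {r d : ℕ}

/-- The integer matrix obtained from a nonnegative-integer matrix. -/
def intMat (A : Matrix (Fin r) (Fin d) ℕ) : Matrix (Fin r) (Fin d) ℤ :=
  fun i j => (A i j : ℤ)

/-- The rational matrix obtained from a nonnegative-integer matrix. -/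
def ratMat (A : Matrix (Fin r) (Fin d) ℕ) : Matrix (Fin r) (Fin d) ℚ :=
  fun i j => (A i j : ℚ)

def natToInt (v : Fin d → ℕ) : Fin d → ℤ := fun i => (v i : ℤ)

/-- `A⁻¹[t]`: nonnegative integer tables with constraint value `t`. -/
def tables (A : Matrix (Fin r) (Fin d) ℕ) (t : Fin r → ℕ) : Set (Fin d → ℕ) :=
  {n | A.mulVec n = t}

/-- `A_ℚ⁻¹[t]`: nonnegative rational points with constraint value `t`. -/
def ratTables (A : Matrix (Fin r) (Fin d) ℕ) (t : Fin r → ℕ) : Set (Fin d → ℚ) :=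
  {q | (∀ i, 0 ≤ q i) ∧ (ratMat A).mulVec q = fun i => (t i : ℚ)}

/-- ker_ℤ(A). -/
def kerZ (A : Matrix (Fin r) (Fin d) ℕ) : Set (Fin d → ℤ) :=
  {m | (intMat A).mulVec m = 0}

/-- The some nonempty subset of the rows of `A` sums to a strictly positive vector. -/
def RowsPos (A : Matrix (Fin r) (Fin d) ℕ) : Prop :=
  ∃ R : Finset (Fin r), R.Nonempty ∧ ∀ j, 0 < ∑ i ∈ R, A i j

/-- `u` and `v` are connected using moves from `M`, staying componentwise nonnegative. -/
def connects (M : Set (Fin d → ℤ)) (u v : Fin d → ℕ) : Prop :=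
  ∃ l : List (Fin d → ℤ), (∀ m ∈ l, m ∈ M) ∧
    natToInt u = natToInt v + l.sum ∧
    ∀ k, k ≤ l.length → ∀ i, 0 ≤ natToInt v i + (l.take k).sum i

/-- A Markov basis for `A`. -/
def IsMarkovBasis (A : Matrix (Fin r) (Fin d) ℕ) (M : Set (Fin d → ℤ)) : Prop :=
  M.Finite ∧ M ⊆ kerZ A ∧
    ∀ u v : Fin d → ℕ, A.mulVec u = A.mulVec v → connects M u v

/-- A Markov subbasis for `A` and the fixed value `t`. -/
def IsMarkovSubbasis (A : Matrix (Fin r) (Fin d) ℕ) (t : Fin r → ℕ)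
    (M : Set (Fin d → ℤ)) : Prop :=
  M.Finite ∧ M ⊆ kerZ A ∧ ∀ u ∈ tables A t, ∀ v ∈ tables A t, connects M u v

/-- A set of (nonnegative) integers is an interval of integers. -/
def IsIntInterval (S : Set ℕ) : Prop :=
  ∀ a ∈ S, ∀ b ∈ S, ∀ c : ℕ, a ≤ c → c ≤ b → c ∈ S

/-- The set of feasible values of cell `i` given that cells `j < i` are fixed to `w j`;
this is the set `π₁(A_{i}⁻¹[t - Σ_{j<i} w_j a_j])` of the paper. -/
def stepSet (A : Matrix (Fin r) (Fin d) ℕ) (t : Fin r → ℕ) (i : Fin d)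
    (w : Fin d → ℕ) : Set ℕ :=
  {c | ∃ n ∈ tables A t, (∀ j, j < i → n j = w j) ∧ n i = c}

/-- The sequential interval property for `A⁻¹[t]`. -/
def SeqIntervalProperty (A : Matrix (Fin r) (Fin d) ℕ) (t : Fin r → ℕ) : Prop :=
  ∀ i : Fin d, ∀ w : Fin d → ℕ, IsIntInterval (stepSet A t i w)

/-- m⁺. -/
def posPart (m : Fin d → ℤ) : Fin d → ℕ := fun i => (m i).toNat

/-- m⁻. -/
def negPart (m : Fin d → ℤ) : Fin d → ℕ := fun i => (-(m i)).toNat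

/-- The monomial `x^ν`. -/
noncomputable def monom (ν : Fin d → ℕ) : MvPolynomial (Fin d) ℚ :=
  MvPolynomial.monomial (Finsupp.equivFunOnFinite.symm ν) 1

/-- The binomial `x^{m⁺} - x^{m⁻}` of a Markov move `m`. -/
noncomputable def moveBinomial (m : Fin d → ℤ) : MvPolynomial (Fin d) ℚ :=
  monom (posPart m) - monom (negPart m)

/-- The toric ideal `I_A`. -/
noncomputable def toricIdeal (A : Matrix (Fin r) (Fin d) ℕ) : Ideal (MvPolynomial (Fin d) ℚ) :=
  Ideal.span {f | ∃ u v : Fin d → ℕ, A.mulVec u = A.mulVec v ∧ f = monom u - monom v}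

/-- Lexicographic order on exponent vectors with `x₁ > x₂ > ⋯ > x_d`:
`μ <lex ν` iff the first nonzero entry of `ν - μ` is positive. -/
def lexLt (μ ν : Fin d →₀ ℕ) : Prop :=
  ∃ i : Fin d, μ i < ν i ∧ ∀ j, j < i → μ j = ν j

/-- `ν` is the lex-leading exponent of `p`. -/
def IsLexLead (p : MvPolynomial (Fin d) ℚ) (ν : Fin d →₀ ℕ) : Prop :=
  ν ∈ p.support ∧ ∀ μ ∈ p.support, μ ≠ ν → lexLt μ ν

/-- `x^νg` divides `x^νf`. -/
def expDivides (νg νf : Fin d →₀ ℕ) : Prop := ∀ i, νg i ≤ νf i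

/-- `G` is a lex Gröbner basis for `I` (ordering `x₁ > x₂ > ⋯ > x_d`). -/
def IsLexGB (G : Set (MvPolynomial (Fin d) ℚ)) (I : Ideal (MvPolynomial (Fin d) ℚ)) : Prop :=
  G.Finite ∧ (∀ g ∈ G, g ≠ 0 ∧ g ∈ I) ∧
    ∀ f ∈ I, f ≠ 0 → ∃ g ∈ G, ∃ νg νf,
      IsLexLead g νg ∧ IsLexLead f νf ∧ expDivides νg νf

/-- Graded reverse lexicographic order with `x_d > x_{d-1} > ⋯ > x₁`:
`μ <grevlex ν` iff deg μ < deg ν, or degrees agree and the first nonzero entry of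
`ν - μ` (scanning coordinates `1, 2, …, d`) is negative. -/
def grevlexLt (μ ν : Fin d →₀ ℕ) : Prop :=
  (∑ i, μ i) < (∑ i, ν i) ∨
    ((∑ i, μ i) = (∑ i, ν i) ∧ ∃ i : Fin d, ν i < μ i ∧ ∀ j, j < i → μ j = ν j)

/-- `ν` is the grevlex-leading exponent of `p`. -/
def IsGrevlexLead (p : MvPolynomial (Fin d) ℚ) (ν : Fin d →₀ ℕ) : Prop :=
  ν ∈ p.support ∧ ∀ μ ∈ p.support, μ ≠ ν → grevlexLt μ ν

/-- `G` is a grevlex Gröbner basis for `I` (ordering `x_d > ⋯ > x₁`). -/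
def IsGrevlexGB (G : Set (MvPolynomial (Fin d) ℚ)) (I : Ideal (MvPolynomial (Fin d) ℚ)) : Prop :=
  G.Finite ∧ (∀ g ∈ G, g ≠ 0 ∧ g ∈ I) ∧
    ∀ f ∈ I, f ≠ 0 → ∃ g ∈ G, ∃ νg νf,
      IsGrevlexLead g νg ∧ IsGrevlexLead f νf ∧ expDivides νg νf

/-- `p` is square-free in `x_i`. -/
def SquareFreeIn (p : MvPolynomial (Fin d) ℚ) (i : Fin d) : Prop :=
  ∀ ν ∈ p.support, ν i ≤ 1

/-- `p` lies in `ℚ[x_i, …, x_d]`. -/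
def OnlyVarsFrom (p : MvPolynomial (Fin d) ℚ) (i : Fin d) : Prop :=
  ∀ ν ∈ p.support, ∀ j, j < i → ν j = 0

/-- The toric ideal `I_{A_j}` of the submatrix of the last columns, viewed inside
`ℚ[x₁, …, x_d]`. -/
noncomputable def toricIdealFrom (A : Matrix (Fin r) (Fin d) ℕ) (j : Fin d) :
    Ideal (MvPolynomial (Fin d) ℚ) :=
  Ideal.span {f | ∃ u v : Fin d → ℕ, (∀ k, k < j → u k = 0) ∧ (∀ k, k < j → v k = 0) ∧
    A.mulVec u = A.mulVec v ∧ f = monom u - monom v}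

end SIS

/-! A Markov basis connects a table with first coordinate `a` to one with first coordinate `b`
by a path of tables in `A⁻¹[t]`. Every move changes the first coordinate by at most one, so along
the path it takes every integer value between `a` and `b`. -/

theorem List.exists_take_sum_eq_of_forall_neg_one_le {l : List ℤ} (hl : ∀ x ∈ l, -1 ≤ x)
    {s c : ℤ} (hc : s + l.sum ≤ c) (hcs : c ≤ s) :
    ∃ k ≤ l.length, s + (l.take k).sum = c := by
  induction l generalizing s with
  | nil => exact ⟨0, le_rfl, by simp only [List.take_nil, List.sum_nil, add_zero] at hc ⊢; omega⟩
  | cons x l ih =>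
    obtain rfl | hlt := hcs.eq_or_lt
    · exact ⟨0, Nat.zero_le _, by simp⟩
    have hx := hl x List.mem_cons_self
    obtain ⟨k, hk, hsum⟩ := ih (fun y hy => hl y (List.mem_cons_of_mem x hy))
      (s := s + x) (by simpa [add_assoc] using hc) (by omega)
    exact ⟨k + 1, by simpa using hk, by simpa [add_assoc] using hsum⟩

namespace SIS

variable {r d : ℕ}

theorem natToInt_injective : Function.Injective (natToInt : (Fin d → ℕ) → Fin d → ℤ) :=
  fun _ _ h => funext fun i => by simpa [natToInt] using congrFun h i

theorem natToInt_mulVec (A : Matrix (Fin r) (Fin d) ℕ) (n : Fin d → ℕ) :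
    natToInt (A *ᵥ n) = intMat A *ᵥ natToInt n := by
  ext i
  simp [natToInt, intMat, mulVec, dotProduct]

theorem mulVec_list_sum_eq_zero {A : Matrix (Fin r) (Fin d) ℕ} {l : List (Fin d → ℤ)}
    (hl : ∀ m ∈ l, m ∈ kerZ A) : intMat A *ᵥ l.sum = 0 := by
  rw [← mulVecLin_apply, map_list_sum]
  exact List.sum_eq_zero fun _ hx => by
    obtain ⟨m, hm, rfl⟩ := List.mem_map.1 hx
    exact hl m hm

theorem mulVec_eq_of_natToInt_eq_add_sum {A : Matrix (Fin r) (Fin d) ℕ}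
    {l : List (Fin d → ℤ)} (hl : ∀ m ∈ l, m ∈ kerZ A) {n v : Fin d → ℕ}
    (hn : natToInt n = natToInt v + l.sum) : A *ᵥ n = A *ᵥ v := by
  apply natToInt_injective
  rw [natToInt_mulVec, natToInt_mulVec, hn, mulVec_add, mulVec_list_sum_eq_zero hl, add_zero]

theorem exists_table_of_connects {A : Matrix (Fin r) (Fin d) ℕ} {M : Set (Fin d → ℤ)}
    (hM : M ⊆ kerZ A) {l : List (Fin d → ℤ)} (hl : ∀ m ∈ l, m ∈ M) {v : Fin d → ℕ}
    {k : ℕ} (hnn : ∀ i, 0 ≤ natToInt v i + (l.take k).sum i) :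
    ∃ n, A *ᵥ n = A *ᵥ v ∧ natToInt n = natToInt v + (l.take k).sum := by
  have hn : natToInt (fun i => (natToInt v i + (l.take k).sum i).toNat) =
      natToInt v + (l.take k).sum :=
    funext fun i => Int.toNat_of_nonneg (hnn i)
  exact ⟨_, mulVec_eq_of_natToInt_eq_add_sum (fun m hm => hM (hl m (List.mem_of_mem_take hm)))
    hn, hn⟩

theorem firstCoords_interval_of_markovBasis_general {r d : ℕ} [NeZero d]
    (A : Matrix (Fin r) (Fin d) ℕ)
    (M : Set (Fin d → ℤ)) (hM : IsMarkovBasis A M)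
    (hpi : ∀ m ∈ M, m 0 = -1 ∨ m 0 = 0 ∨ m 0 = 1)
    (t : Fin r → ℕ) :
    IsIntInterval {c : ℕ | ∃ n ∈ tables A t, n 0 = c} := by
  rintro _ ⟨u, hu, rfl⟩ _ ⟨v, hv, rfl⟩ c hac hcb
  obtain ⟨-, hker, hconn⟩ := hM
  obtain ⟨l, hlM, hsum, hnn⟩ := hconn u v (hu.trans hv.symm)
  have hcoord (l' : List (Fin d → ℤ)) : l'.sum 0 = (l'.map (· 0)).sum :=
    map_list_sum (Pi.evalAddMonoidHom (fun _ => ℤ) 0) l'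
  have hsum0 : (v 0 : ℤ) + (l.map (· 0)).sum = u 0 := by
    simpa [natToInt, hcoord] using (congrFun hsum 0).symm
  have hstep : ∀ x ∈ l.map (· 0), -1 ≤ x := by
    simp only [List.forall_mem_map]
    intro m hm
    rcases hpi m (hlM m hm) with h | h | h <;> omega
  obtain ⟨k, hk, hkc⟩ := List.exists_take_sum_eq_of_forall_neg_one_le (s := v 0) (c := c) hstep
    (by omega) (by omega)
  obtain ⟨n, hn, hnv⟩ := exists_table_of_connects hker hlM (hnn k (by simpa using hk))
  refine ⟨n, hn.trans hv, ?_⟩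
  have hn0 := congrFun hnv 0
  simp only [natToInt, Pi.add_apply, hcoord, List.map_take] at hn0
  omega

/-- Lemma 3.1. If a Markov basis `M_A` for `A` satisfies
`π₁(M_A) ⊆ {-1, 0, +1}`, then for every `t` the set `π₁(A⁻¹[t])` is an
interval of integers. -/
theorem firstCoords_interval_of_markovBasis {r d : ℕ} [NeZero d]
    (A : Matrix (Fin r) (Fin d) ℕ) (hA : RowsPos A)
    (M : Set (Fin d → ℤ)) (hM : IsMarkovBasis A M)
    (hpi : ∀ m ∈ M, m 0 = -1 ∨ m 0 = 0 ∨ m 0 = 1)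
    (t : Fin r → ℕ) :
    IsIntInterval {c : ℕ | ∃ n ∈ tables A t, n 0 = c} :=
  firstCoords_interval_of_markovBasis_general A M hM hpi t

end SIS
end

section
/- Suppose a Markov basis M_A = {±m₁,…,±m_g} for A has the property that G := {x^{m_i⁺} − x^{m_i⁻} : i = 1,…,g} is a lex Gröbner basis for the toric ideal I_A with ordering x₁ > x₂ > ⋯ > x_d on indeterminates, and suppose that for each i = 1,…,d every element of G lying in ℚ[x_i,…,x_d] is square-free in x_i. Then A⁻¹[t] has the sequential interval property for every t ∈ ℤ₊^r. -/
open Matrix MvPolynomial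

namespace SIS

variable {r d : ℕ}

/-! ### Auxiliary lemmas -/

lemma lexLt_asymm {μ ν : Fin d →₀ ℕ} (h1 : lexLt μ ν) (h2 : lexLt ν μ) : False := by
  obtain ⟨i, hi, hbi⟩ := h1
  obtain ⟨j, hj, hbj⟩ := h2
  rcases lt_trichotomy i j with h | h | h
  · have := hbj i h; omega
  · subst h; omega
  · have := hbi j h; omega

lemma isLexLead_unique {p : MvPolynomial (Fin d) ℚ} {ν₁ ν₂ : Fin d →₀ ℕ}
    (h1 : IsLexLead p ν₁) (h2 : IsLexLead p ν₂) : ν₁ = ν₂ := by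
  by_contra hne
  exact lexLt_asymm (h2.2 ν₁ h1.1 hne) (h1.2 ν₂ h2.1 (Ne.symm hne))

lemma symm_inj {u v : Fin d → ℕ}
    (h : (Finsupp.equivFunOnFinite.symm u : Fin d →₀ ℕ) = Finsupp.equivFunOnFinite.symm v) :
    u = v := Finsupp.equivFunOnFinite.symm.injective h

lemma coeff_monom_sub (u v : Fin d → ℕ) (c : Fin d →₀ ℕ) :
    (monom u - monom v).coeff c =
      (if (Finsupp.equivFunOnFinite.symm u : Fin d →₀ ℕ) = c then 1 else 0)
        - (if (Finsupp.equivFunOnFinite.symm v : Fin d →₀ ℕ) = c then 1 else 0) := by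
  simp [monom, MvPolynomial.coeff_monomial]

lemma support_monom_sub {u v : Fin d → ℕ} (h : u ≠ v) :
    (monom u - monom v).support =
      {Finsupp.equivFunOnFinite.symm u, Finsupp.equivFunOnFinite.symm v} := by
  have hne : (Finsupp.equivFunOnFinite.symm u : Fin d →₀ ℕ) ≠ Finsupp.equivFunOnFinite.symm v :=
    fun he => h (symm_inj he)
  ext c
  rw [MvPolynomial.mem_support_iff, coeff_monom_sub, Finset.mem_insert, Finset.mem_singleton]
  constructor
  · intro hc
    by_contra hcc
    push_neg at hcc
    rw [if_neg (fun he => hcc.1 he.symm), if_neg (fun he => hcc.2 he.symm)] at hc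
    simp at hc
  · rintro (rfl | rfl)
    · rw [if_pos rfl, if_neg (Ne.symm hne)]; norm_num
    · rw [if_neg hne, if_pos rfl]; norm_num

lemma monom_sub_ne_zero {u v : Fin d → ℕ} (h : u ≠ v) : monom u - monom v ≠ 0 := by
  intro h0
  have := support_monom_sub h
  rw [h0, MvPolynomial.support_zero] at this
  exact absurd this.symm (by simp)

lemma isLexLead_monom_sub {u v : Fin d → ℕ} (h : u ≠ v)
    (hlt : lexLt (Finsupp.equivFunOnFinite.symm u) (Finsupp.equivFunOnFinite.symm v)) :
    IsLexLead (monom u - monom v) (Finsupp.equivFunOnFinite.symm v) := by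
  constructor
  · rw [support_monom_sub h]; simp
  · intro μ hμ hne
    rw [support_monom_sub h, Finset.mem_insert, Finset.mem_singleton] at hμ
    rcases hμ with rfl | rfl
    · exact hlt
    · exact absurd rfl hne

lemma mulVec_int_cast (A : Matrix (Fin r) (Fin d) ℕ) (u : Fin d → ℕ) (i : Fin r) :
    (intMat A).mulVec (natToInt u) i = (A.mulVec u i : ℤ) := by
  simp [Matrix.mulVec, dotProduct, intMat, natToInt]

lemma mem_tables_iff {A : Matrix (Fin r) (Fin d) ℕ} {t : Fin r → ℕ} {u : Fin d → ℕ} :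
    u ∈ tables A t ↔ (intMat A).mulVec (natToInt u) = fun i => (t i : ℤ) := by
  constructor
  · intro h
    funext i
    rw [mulVec_int_cast]
    exact_mod_cast congrFun h i
  · intro h
    funext i
    have := congrFun h i
    rw [mulVec_int_cast] at this
    exact_mod_cast this

lemma table_sub_move {A : Matrix (Fin r) (Fin d) ℕ} {t : Fin r → ℕ} {v : Fin d → ℕ}
    (hv : v ∈ tables A t) {M : Fin d → ℤ} (hM : M ∈ kerZ A)
    (hle : ∀ k, posPart M k ≤ v k) :
    (fun k => v k - posPart M k + negPart M k) ∈ tables A t := by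
  rw [mem_tables_iff] at hv ⊢
  have hcast : natToInt (fun k => v k - posPart M k + negPart M k) = natToInt v - M := by
    funext k
    have := hle k
    simp only [natToInt, posPart, negPart, Pi.sub_apply] at *
    omega
  rw [hcast, Matrix.mulVec_sub, hv, hM]
  funext i
  simp

lemma neg_mem_kerZ {A : Matrix (Fin r) (Fin d) ℕ} {M : Fin d → ℤ} (hM : M ∈ kerZ A) :
    -M ∈ kerZ A := by
  simp only [kerZ, Set.mem_setOf_eq, Matrix.mulVec_neg] at *
  rw [hM, neg_zero]

lemma posPart_neg (M : Fin d → ℤ) : posPart (-M) = negPart M := rfl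

lemma negPart_neg (M : Fin d → ℤ) : negPart (-M) = posPart M := by
  funext j; simp [posPart, negPart]

/-- Key descent lemma. -/
lemma key_step (A : Matrix (Fin r) (Fin d) ℕ)
    (g : ℕ) (m : Fin g → (Fin d → ℤ))
    (hker : ∀ k : Fin g, m k ∈ kerZ A)
    (G : Set (MvPolynomial (Fin d) ℚ))
    (hGdef : G = {p | ∃ i : Fin g, p = moveBinomial (m i)})
    (hGB : IsLexGB G (toricIdeal A))
    (hsq : ∀ p ∈ G, ∀ i : Fin d, OnlyVarsFrom p i → SquareFreeIn p i)
    (t : Fin r → ℕ) (i : Fin d) :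
    ∀ v u : Fin d → ℕ, u ∈ tables A t → v ∈ tables A t →
      (∀ j, j < i → u j = v j) → u i < v i →
      ∃ n ∈ tables A t, (∀ j, j < i → n j = v j) ∧ n i + 1 = v i := by
  have wf : WellFounded
      (Pi.Lex ((· < ·) : Fin d → Fin d → Prop) (fun {_} => ((· < ·) : ℕ → ℕ → Prop))) :=
    Pi.Lex.wellFounded _ (fun _ => Nat.lt_wfRel.wf)
  intro v
  induction v using WellFounded.induction wf with
  | _ v IH =>
  intro u hu hv hagree hlt
  set u' : Fin d → ℕ := fun k => if k < i then 0 else u k with hu'def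
  set v' : Fin d → ℕ := fun k => if k < i then 0 else v k with hv'def
  have hu'app : ∀ k, u' k = if k < i then 0 else u k := fun k => rfl
  have hv'app : ∀ k, v' k = if k < i then 0 else v k := fun k => rfl
  -- A u' = A v'
  have hAuv : A.mulVec u' = A.mulVec v' := by
    set c : Fin d → ℕ := fun k => if k < i then u k else 0 with hcdef
    have h1 : u' + c = u := by
      funext k; by_cases hk : k < i <;> simp [hu'def, hcdef, hk]
    have h2 : v' + c = v := by
      funext k
      by_cases hk : k < i <;> simp [hv'def, hcdef, hk]
      exact hagree k hk
    have e1 : A.mulVec u' + A.mulVec c = A.mulVec v' + A.mulVec c := by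
      rw [← Matrix.mulVec_add, ← Matrix.mulVec_add, h1, h2, hu, hv]
    exact add_right_cancel e1
  have huv' : u' ≠ v' := by
    intro h
    have h2 := congrFun h i
    rw [hu'app i, hv'app i, if_neg (lt_irrefl i), if_neg (lt_irrefl i)] at h2
    omega
  have hf'mem : monom u' - monom v' ∈ toricIdeal A :=
    Ideal.subset_span ⟨u', v', hAuv, rfl⟩
  have hf'ne : monom u' - monom v' ≠ 0 := monom_sub_ne_zero huv'
  have hlex : lexLt (Finsupp.equivFunOnFinite.symm u') (Finsupp.equivFunOnFinite.symm v') := by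
    refine ⟨i, ?_, ?_⟩
    · show (if i < i then 0 else u i) < (if i < i then 0 else v i)
      rw [if_neg (lt_irrefl i), if_neg (lt_irrefl i)]
      exact hlt
    · intro j hj
      show (if j < i then 0 else u j) = (if j < i then 0 else v j)
      rw [if_pos hj, if_pos hj]
  obtain ⟨g', hg'G, νg, νf, hleadg, hleadf', hdiv⟩ := hGB.2.2 _ hf'mem hf'ne
  have hνf : νf = Finsupp.equivFunOnFinite.symm v' :=
    isLexLead_unique hleadf' (isLexLead_monom_sub huv' hlex)
  subst hνf
  obtain ⟨k, hk⟩ : ∃ k : Fin g, g' = moveBinomial (m k) := by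
    rw [hGdef] at hg'G; exact hg'G
  have hg'ne : g' ≠ 0 := (hGB.2.1 g' hg'G).1
  have hmk : m k ≠ 0 := by
    intro h0
    apply hg'ne
    rw [hk, h0]
    show monom (posPart 0) - monom (negPart 0) = 0
    have he : posPart (0 : Fin d → ℤ) = negPart 0 := by
      funext j; simp [posPart, negPart]
    rw [he, sub_self]
  -- orient the move
  obtain ⟨M, hMker, hMne, hg'supp, hMpos, hMlex⟩ :
      ∃ M : Fin d → ℤ, M ∈ kerZ A ∧ M ≠ 0 ∧
        g'.support = {Finsupp.equivFunOnFinite.symm (posPart M),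
          Finsupp.equivFunOnFinite.symm (negPart M)} ∧
        (Finsupp.equivFunOnFinite.symm (posPart M) : Fin d →₀ ℕ) = νg ∧
        lexLt (Finsupp.equivFunOnFinite.symm (negPart M))
          (Finsupp.equivFunOnFinite.symm (posPart M)) := by
    have hppne : posPart (m k) ≠ negPart (m k) := by
      intro h
      apply hmk
      funext j
      show m k j = 0
      have := congrFun h j
      simp only [posPart, negPart] at this
      omega
    have hsupp : g'.support = {Finsupp.equivFunOnFinite.symm (posPart (m k)),
        Finsupp.equivFunOnFinite.symm (negPart (m k))} := by
      rw [hk]; exact support_monom_sub hppne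
    have hνg := hleadg.1
    rw [hsupp, Finset.mem_insert, Finset.mem_singleton] at hνg
    rcases hνg with h | h
    · refine ⟨m k, hker k, hmk, hsupp, h.symm, ?_⟩
      have hmem : (Finsupp.equivFunOnFinite.symm (negPart (m k)) : Fin d →₀ ℕ) ∈ g'.support := by
        rw [hsupp]; simp
      have hne2 : (Finsupp.equivFunOnFinite.symm (negPart (m k)) : Fin d →₀ ℕ) ≠ νg := by
        rw [h]; exact fun he => hppne (symm_inj he).symm
      have := hleadg.2 _ hmem hne2
      rwa [h] at this
    · refine ⟨-(m k), neg_mem_kerZ (hker k), neg_ne_zero.mpr hmk, ?_, ?_, ?_⟩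
      · rw [hsupp, posPart_neg, negPart_neg, Finset.pair_comm]
      · rw [posPart_neg]; exact h.symm
      · rw [posPart_neg, negPart_neg]
        have hmem : (Finsupp.equivFunOnFinite.symm (posPart (m k)) : Fin d →₀ ℕ) ∈ g'.support := by
          rw [hsupp]; simp
        have hne2 : (Finsupp.equivFunOnFinite.symm (posPart (m k)) : Fin d →₀ ℕ) ≠ νg := by
          rw [h]; exact fun he => hppne (symm_inj he)
        have := hleadg.2 _ hmem hne2
        rwa [h] at this
  -- minimal nonzero index
  have hex : (Finset.univ.filter (fun j : Fin d => M j ≠ 0)).Nonempty := by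
    rcases Function.ne_iff.mp hMne with ⟨j, hj⟩
    refine ⟨j, ?_⟩
    simp only [Finset.mem_filter, Finset.mem_univ, true_and]
    simpa using hj
  set j₀ := (Finset.univ.filter (fun j : Fin d => M j ≠ 0)).min' hex with hj₀def
  have hj₀ne : M j₀ ≠ 0 := by
    have := Finset.min'_mem _ hex
    simpa using this
  have hbelow : ∀ j, j < j₀ → M j = 0 := by
    intro j hj
    by_contra h
    have : j₀ ≤ j := Finset.min'_le _ _ (by simp [h])
    exact absurd this (not_le.mpr hj)
  -- divisibility
  have hdivle : ∀ j : Fin d, posPart M j ≤ v' j := by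
    intro j
    have := hdiv j
    rw [← hMpos] at this
    exact this
  -- positive at j₀
  have hMj₀pos : 0 < M j₀ := by
    obtain ⟨i₁, hi₁, hbi₁⟩ := hMlex
    have hi₁' : (-(M i₁)).toNat < (M i₁).toNat := hi₁
    have hMi₁pos : 0 < M i₁ := by omega
    have h1 : ¬ i₁ < j₀ := by
      intro hcon
      have := hbelow i₁ hcon
      omega
    have h2 : ¬ j₀ < i₁ := by
      intro hcon
      have h3 : (-(M j₀)).toNat = (M j₀).toNat := hbi₁ j₀ hcon
      omega
    have : i₁ = j₀ := le_antisymm (not_lt.mp h2) (not_lt.mp h1)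
    rw [← this]
    exact hMi₁pos
  -- i ≤ j₀
  have hij₀ : i ≤ j₀ := by
    by_contra hcon
    push_neg at hcon
    have h1 := hdivle j₀
    rw [hv'app j₀, if_pos hcon] at h1
    have : posPart M j₀ = 0 := Nat.le_zero.mp h1
    simp only [posPart] at this
    omega
  -- squarefree gives M j₀ = 1
  have hsf : M j₀ = 1 := by
    have honly : OnlyVarsFrom g' j₀ := by
      intro ν hν j hj
      rw [hg'supp, Finset.mem_insert, Finset.mem_singleton] at hν
      have hM0 := hbelow j hj
      rcases hν with rfl | rfl
      · show posPart M j = 0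
        simp [posPart, hM0]
      · show negPart M j = 0
        simp [negPart, hM0]
    have hsq' := hsq g' hg'G j₀ honly
    have hle1 : posPart M j₀ ≤ 1 := by
      have := hsq' νg hleadg.1
      rw [← hMpos] at this
      exact this
    simp only [posPart] at hle1
    omega
  -- posPart M ≤ v
  have hlev : ∀ kk, posPart M kk ≤ v kk := by
    intro kk
    have h1 := hdivle kk
    rw [hv'app kk] at h1
    by_cases hkk : kk < i
    · rw [if_pos hkk] at h1; omega
    · rwa [if_neg hkk] at h1
  set v'' : Fin d → ℕ := fun kk => v kk - posPart M kk + negPart M kk with hv''def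
  have hv''mem : v'' ∈ tables A t := table_sub_move hv hMker hlev
  have hv''eq : ∀ j, j < j₀ → v'' j = v j := by
    intro j hj
    have h0 := hbelow j hj
    show v j - posPart M j + negPart M j = v j
    simp [posPart, negPart, h0]
  have hv''j₀ : v'' j₀ + 1 = v j₀ := by
    have h1 : posPart M j₀ = 1 := by simp [posPart, hsf]
    have h2 : negPart M j₀ = 0 := by simp [negPart, hsf]
    have h3 : posPart M j₀ ≤ v j₀ := hlev j₀
    show v j₀ - posPart M j₀ + negPart M j₀ + 1 = v j₀
    rw [h1, h2]
    omega
  rcases eq_or_lt_of_le hij₀ with heq | hlt'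
  · exact ⟨v'', hv''mem, fun j hj => hv''eq j (heq ▸ hj), heq ▸ hv''j₀⟩
  · have hlexlt : Pi.Lex ((· < ·) : Fin d → Fin d → Prop)
        (fun {_} => ((· < ·) : ℕ → ℕ → Prop)) v'' v :=
      ⟨j₀, fun j hj => hv''eq j hj, by omega⟩
    have hv''i : v'' i = v i := hv''eq i hlt'
    obtain ⟨n, hn, hnag, hni⟩ := IH v'' hlexlt u hu hv''mem
      (fun j hj => by rw [hv''eq j (hj.trans hlt')]; exact hagree j hj)
      (by rw [hv''i]; exact hlt)
    refine ⟨n, hn, fun j hj => ?_, by rw [hni, hv''i]⟩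
    rw [hnag j hj, hv''eq j (hj.trans hlt')]


/-- Proposition 3.1. Suppose a Markov basis
`M_A = {±m₁, …, ±m_g}` is such that `G = {x^{m_i⁺} - x^{m_i⁻}}` is a lex Gröbner
basis for the toric ideal `I_A` with `x₁ > x₂ > ⋯ > x_d`, and every element of
`G` lying in `ℚ[x_i, …, x_d]` is square-free in `x_i`, for each `i`. Then
`A⁻¹[t]` has the sequential interval property for all `t`. -/
theorem seqInterval_of_squarefree_lexGB {r d : ℕ}
    (A : Matrix (Fin r) (Fin d) ℕ) (hA : RowsPos A)
    (g : ℕ) (m : Fin g → (Fin d → ℤ))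
    (hMB : IsMarkovBasis A {v | ∃ i, v = m i ∨ v = -(m i)})
    (G : Set (MvPolynomial (Fin d) ℚ))
    (hGdef : G = {p | ∃ i : Fin g, p = moveBinomial (m i)})
    (hGB : IsLexGB G (toricIdeal A))
    (hsq : ∀ p ∈ G, ∀ i : Fin d, OnlyVarsFrom p i → SquareFreeIn p i)
    (t : Fin r → ℕ) :
    SeqIntervalProperty A t := by
  intro i w
  intro a ha b hb c hac hcb
  obtain ⟨u, hu, huw, hua⟩ := ha
  obtain ⟨v, hv, hvw, hvb⟩ := hb
  have hker : ∀ k : Fin g, m k ∈ kerZ A := fun k => hMB.2.1 ⟨k, Or.inl rfl⟩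
  have key := key_step A g m hker G hGdef hGB hsq t i
  have main : ∀ k : ℕ, ∀ x : Fin d → ℕ, x ∈ tables A t → (∀ j, j < i → x j = w j) →
      x i = c + k → c ∈ stepSet A t i w := by
    intro k
    induction k with
    | zero =>
      intro x hx hxw hxi
      exact ⟨x, hx, hxw, by omega⟩
    | succ k ih =>
      intro x hx hxw hxi
      have hlt : u i < x i := by omega
      obtain ⟨n, hn, hnw, hni⟩ := key x u hu hx
        (fun j hj => by rw [huw j hj, ← hxw j hj]) hlt
      exact ih n hn (fun j hj => by rw [hnw j hj]; exact hxw j hj) (by omega)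
  exact main (b - c) v hv hvw (by omega)

end SIS
end

section
/- Let A be a nonnegative integer matrix such that A⁻¹[t] has the sequential interval property for every t ∈ ℤ₊^r. Then the reduced lex Gröbner basis G for the toric ideal I_A with ordering x₁ > x₂ > ⋯ > x_d has the property that for each i = 1,…,d every element of G lying in ℚ[x_i,…,x_d] is square-free in x_i. -/
open Matrix MvPolynomial

namespace SIS

variable {r d : ℕ}

/-- `G` is the reduced lex Gröbner basis for `I`: a lex Gröbner basis whose elements
are monic and such that no monomial occurring in an element of `G` is divisible by
the lex-leading monomial of a different element of `G`. -/
def IsReducedLexGB (G : Set (MvPolynomial (Fin d) ℚ))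
    (I : Ideal (MvPolynomial (Fin d) ℚ)) : Prop :=
  IsLexGB G I ∧
    (∀ g ∈ G, ∃ ν, IsLexLead g ν ∧ MvPolynomial.coeff ν g = 1) ∧
    ∀ g ∈ G, ∀ g' ∈ G, g' ≠ g → ∀ ν ∈ g.support, ∀ ν',
      IsLexLead g' ν' → ¬ expDivides ν' ν

/-!
Suppose `x^ν` occurs in `p ∈ G ∩ ℚ[x_i, …, x_d]` with `ν_i ≥ 2`. Since `I_A` is homogeneous for
the grading `deg x_j = a_j` and contains no nonzero monomial, `p` has a second monomial `x^μ` with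
`Aμ = Aν`. If `μ_i = ν_i`, cancelling `x_i^{ν_i}` from `x^ν - x^μ` leaves a binomial of `I_A` whose
leading monomial properly divides `x^μ` or `x^ν`. If `μ_i < ν_i`, the sequential interval property
gives `n ∈ A⁻¹[Aν]` with `n_j = 0` for `j < i` and `n_i = ν_i - 1`, and `x^ν / x_i - x^n / x_i ∈ I_A`
has leading monomial `x^ν / x_i`. Either way a monomial of `p` is a proper multiple of a leading
monomial of `I_A`, which a reduced Gröbner basis forbids.
-/

section Lex

lemma lexLt_iff {μ ν : Fin d →₀ ℕ} : lexLt μ ν ↔ toLex μ < toLex ν := by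
  simp only [lexLt, Finsupp.Lex.lt_iff, ofLex_toLex, and_comm]

lemma lexLt_of_lt {μ ν : Fin d →₀ ℕ} (h : μ < ν) : lexLt μ ν :=
  lexLt_iff.2 <| Finsupp.toLex_monotone.strictMono_of_injective toLex.injective h

lemma lexLt_or_lexLt_of_ne {μ ν : Fin d →₀ ℕ} (h : μ ≠ ν) : lexLt μ ν ∨ lexLt ν μ := by
  simpa only [lexLt_iff] using lt_or_gt_of_ne (toLex.injective.ne h)

lemma IsLexLead.unique {p : MvPolynomial (Fin d) ℚ} {μ ν : Fin d →₀ ℕ}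
    (hμ : IsLexLead p μ) (hν : IsLexLead p ν) : μ = ν := by
  by_contra h
  exact (lexLt_iff.1 (hν.2 μ hμ.1 h)).asymm (lexLt_iff.1 (hμ.2 ν hν.1 (Ne.symm h)))

lemma isLexLead_monomial_sub_monomial {μ ν : Fin d →₀ ℕ} (h : lexLt ν μ) :
    IsLexLead (monomial μ (1 : ℚ) - monomial ν 1) μ := by
  classical
  have hne : ν ≠ μ := fun e => (lexLt_iff.1 h).ne (congrArg toLex e)
  refine ⟨by simp [coeff_monomial, hne], fun κ hκ hκμ => ?_⟩
  obtain rfl : κ = ν := by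
    by_contra hκν
    simp [coeff_monomial, Ne.symm hκμ, Ne.symm hκν] at hκ
  exact h

end Lex

section Toric

variable {A : Matrix (Fin r) (Fin d) ℕ}

lemma monom_coe (ν : Fin d →₀ ℕ) : monom ⇑ν = monomial ν (1 : ℚ) := by
  simp [monom]

lemma monomial_sub_monomial_mem_toricIdeal {μ ν : Fin d →₀ ℕ} (h : A *ᵥ ⇑μ = A *ᵥ ⇑ν) :
    monomial μ (1 : ℚ) - monomial ν 1 ∈ toricIdeal A :=
  Ideal.subset_span ⟨μ, ν, h, by rw [monom_coe, monom_coe]⟩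

def columns (A : Matrix (Fin r) (Fin d) ℕ) : Fin d → Fin r → ℕ := fun j k => A k j

lemma weight_columns (A : Matrix (Fin r) (Fin d) ℕ) (ν : Fin d →₀ ℕ) :
    Finsupp.weight (columns A) ν = A *ᵥ ⇑ν := by
  ext k
  simp [Finsupp.weight_apply, Finsupp.sum_fintype, columns, Matrix.mulVec, dotProduct, mul_comm]

attribute [local instance] weightedGradedAlgebra in
lemma toricIdeal_isHomogeneous (A : Matrix (Fin r) (Fin d) ℕ) :
    (toricIdeal A).IsHomogeneous (weightedHomogeneousSubmodule ℚ (columns A)) := by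
  refine Ideal.homogeneous_span _ _ ?_
  rintro _ ⟨u, v, huv, rfl⟩
  refine ⟨A *ᵥ u, Submodule.sub_mem _ ?_ ?_⟩ <;>
  · refine isWeightedHomogeneous_monomial _ _ _ ?_
    simp [weight_columns, huv]

lemma eval_one_monomial (ν : Fin d →₀ ℕ) (c : ℚ) : eval 1 (monomial ν c) = c := by
  simp [eval_monomial, Finsupp.prod]

lemma eval_one_eq_zero_of_mem_toricIdeal {p : MvPolynomial (Fin d) ℚ} (hp : p ∈ toricIdeal A) :
    eval 1 p = 0 := by
  refine Submodule.span_induction ?_ (by simp) (fun _ _ _ _ hx hy => by simp [hx, hy])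
    (fun a _ _ hx => by simp [hx]) hp
  rintro _ ⟨u, v, -, rfl⟩
  simp [monom, eval_one_monomial]

lemma exists_ne_mem_support_mulVec_eq {p : MvPolynomial (Fin d) ℚ} (hp : p ∈ toricIdeal A)
    {ν : Fin d →₀ ℕ} (hν : ν ∈ p.support) :
    ∃ μ ∈ p.support, μ ≠ ν ∧ A *ᵥ ⇑μ = A *ᵥ ⇑ν := by
  classical
  by_contra! h
  have hcomp : weightedHomogeneousComponent (columns A) (A *ᵥ ⇑ν) p
      = monomial ν (coeff ν p) := by
    ext μ
    rw [coeff_weightedHomogeneousComponent, coeff_monomial, weight_columns]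
    by_cases hμν : μ = ν
    · simp [hμν]
    · by_cases hμ : μ ∈ p.support
      · simp [h μ hμ hμν, Ne.symm hμν]
      · simp_all
  have hmem := weightedHomogeneousComponent_mem_of_mem ℚ (columns A)
    (toricIdeal_isHomogeneous A) hp (A *ᵥ ⇑ν)
  rw [hcomp] at hmem
  exact mem_support_iff.1 hν (by simpa [eval_one_monomial] using
    eval_one_eq_zero_of_mem_toricIdeal hmem)

end Toric

section ReducedGB

variable {G : Set (MvPolynomial (Fin d) ℚ)} {I : Ideal (MvPolynomial (Fin d) ℚ)}
  {p : MvPolynomial (Fin d) ℚ} {σ : Fin d →₀ ℕ}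

lemma IsReducedLexGB.eq_of_isLexLead_le (hG : IsReducedLexGB G I) (hp : p ∈ G)
    (hσ : σ ∈ p.support) {f : MvPolynomial (Fin d) ℚ} (hf : f ∈ I) (hf0 : f ≠ 0)
    {α : Fin d →₀ ℕ} (hα : IsLexLead f α) (hασ : α ≤ σ) : α = σ := by
  obtain ⟨g, hg, β, α', hβ, hα', hβα⟩ := hG.1.2.2 f hf hf0
  obtain rfl := hα'.unique hα
  have hβσ : β ≤ σ := (Finsupp.le_def.2 hβα).trans hασ
  by_cases hgp : g = p
  · -- reducedness only constrains the other elements; here `β` would be lex-below `σ ∈ p.support`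
    subst hgp
    by_contra hne
    have hβne : β ≠ σ := fun h => hne (le_antisymm hασ (h ▸ Finsupp.le_def.2 hβα))
    exact (lexLt_iff.1 (lexLt_of_lt (lt_of_le_of_ne hβσ hβne))).asymm
      (lexLt_iff.1 (hβ.2 σ hσ (Ne.symm hβne)))
  · exact absurd (Finsupp.le_def.1 hβσ) (hG.2.2 p hp g hg hgp σ hσ β hβ)

lemma IsReducedLexGB.not_lexLt_tsub {A : Matrix (Fin r) (Fin d) ℕ}
    (hG : IsReducedLexGB G (toricIdeal A)) (hp : p ∈ G) (hσ : σ ∈ p.support)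
    {τ γ : Fin d →₀ ℕ} (hA : A *ᵥ ⇑σ = A *ᵥ ⇑τ) (hγσ : γ ≤ σ) (hγτ : γ ≤ τ) (hγ : γ ≠ 0) :
    ¬ lexLt (τ - γ) (σ - γ) := by
  intro hlt
  have hA' : A *ᵥ ⇑(σ - γ) = A *ᵥ ⇑(τ - γ) := by
    refine add_right_cancel (b := A *ᵥ ⇑γ) ?_
    rw [← Matrix.mulVec_add, ← Matrix.mulVec_add, ← Finsupp.coe_add, ← Finsupp.coe_add,
      tsub_add_cancel_of_le hγσ, tsub_add_cancel_of_le hγτ, hA]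
  have hlead := isLexLead_monomial_sub_monomial hlt
  have hf0 : monomial (σ - γ) (1 : ℚ) - monomial (τ - γ) 1 ≠ 0 := fun h0 => by
    simpa [h0] using hlead.1
  have heq := hG.eq_of_isLexLead_le hp hσ (monomial_sub_monomial_mem_toricIdeal hA') hf0 hlead
    tsub_le_self
  exact hγ (left_eq_add.1 ((tsub_eq_iff_eq_add_of_le hγσ).1 heq))

end ReducedGB

section Squarefree

variable {A : Matrix (Fin r) (Fin d) ℕ} {G : Set (MvPolynomial (Fin d) ℚ)}
  {p : MvPolynomial (Fin d) ℚ} {μ ν : Fin d →₀ ℕ} {i : Fin d}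

lemma IsReducedLexGB.mulVec_ne_of_apply_eq (hG : IsReducedLexGB G (toricIdeal A)) (hp : p ∈ G)
    (hμ : μ ∈ p.support) (hν : ν ∈ p.support) (hμν : μ ≠ ν) (hi : μ i = ν i) (hi0 : ν i ≠ 0) :
    A *ᵥ ⇑μ ≠ A *ᵥ ⇑ν := by
  intro hA
  set γ := Finsupp.single i (ν i)
  have hγν : γ ≤ ν := Finsupp.single_le_iff.2 le_rfl
  have hγμ : γ ≤ μ := Finsupp.single_le_iff.2 hi.ge
  have hγ : γ ≠ 0 := Finsupp.single_ne_zero.2 hi0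
  have hne : μ - γ ≠ ν - γ := fun h => hμν <| by
    rw [← tsub_add_cancel_of_le hγμ, h, tsub_add_cancel_of_le hγν]
  rcases lexLt_or_lexLt_of_ne hne with hlt | hlt
  · exact hG.not_lexLt_tsub hp hν hA.symm hγν hγμ hγ hlt
  · exact hG.not_lexLt_tsub hp hμ hA hγμ hγν hγ hlt

lemma IsReducedLexGB.apply_le_one_of_lt (hG : IsReducedLexGB G (toricIdeal A))
    (hseq : SeqIntervalProperty A (A *ᵥ ⇑ν)) (hp : p ∈ G) (honly : OnlyVarsFrom p i)
    (hμ : μ ∈ p.support) (hν : ν ∈ p.support) (hA : A *ᵥ ⇑μ = A *ᵥ ⇑ν) (hlt : μ i < ν i) :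
    ν i ≤ 1 := by
  by_contra! h2
  obtain ⟨n, hn, hn0, hni⟩ := hseq i 0 (μ i) ⟨μ, hA, honly μ hμ, rfl⟩ (ν i)
    ⟨ν, rfl, honly ν hν, rfl⟩ (ν i - 1) (by omega) (by omega)
  set τ := Finsupp.equivFunOnFinite.symm n
  have hτ : ⇑τ = n := Finsupp.coe_equivFunOnFinite_symm n
  set γ := Finsupp.single i 1
  refine hG.not_lexLt_tsub hp hν (τ := τ) (γ := γ) (by rw [hτ]; exact hn.symm)
    (Finsupp.single_le_iff.2 (by omega)) (Finsupp.single_le_iff.2 (by rw [hτ]; omega))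
    (Finsupp.single_ne_zero.2 one_ne_zero) ⟨i, ?_, fun j hj => ?_⟩
  · simp only [γ, Finsupp.coe_tsub, Pi.sub_apply, Finsupp.single_eq_same, hτ, hni]
    omega
  · simp [γ, hτ, hj.ne, hn0 j hj, honly ν hν j hj]

end Squarefree

theorem squarefree_of_seqInterval_general {r d : ℕ}
    (A : Matrix (Fin r) (Fin d) ℕ)
    (hseq : ∀ t : Fin r → ℕ, SeqIntervalProperty A t)
    (G : Set (MvPolynomial (Fin d) ℚ))
    (hG : IsReducedLexGB G (toricIdeal A)) :
    ∀ p ∈ G, ∀ i : Fin d, OnlyVarsFrom p i → SquareFreeIn p i := by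
  intro p hp i honly ν hν
  obtain ⟨μ, hμ, hμν, hA⟩ := exists_ne_mem_support_mulVec_eq (hG.1.2.1 p hp).2 hν
  rcases lt_trichotomy (μ i) (ν i) with hlt | heq | hgt
  · exact hG.apply_le_one_of_lt (hseq _) hp honly hμ hν hA hlt
  · by_contra! h
    exact hG.mulVec_ne_of_apply_eq hp hμ hν hμν heq (by omega) hA
  · have := hG.apply_le_one_of_lt (hseq _) hp honly hν hμ hA.symm hgt
    omega

/-- Proposition 3.2. If `A⁻¹[t]` has the sequential interval
property for all `t`, then the reduced lex Gröbner basis `G` for `I_A` with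
`x₁ > x₂ > ⋯ > x_d` has `G ∩ ℚ[x_i, …, x_d]` square-free in `x_i` for all `i`. -/
theorem squarefree_of_seqInterval {r d : ℕ}
    (A : Matrix (Fin r) (Fin d) ℕ) (hA : RowsPos A)
    (hseq : ∀ t : Fin r → ℕ, SeqIntervalProperty A t)
    (G : Set (MvPolynomial (Fin d) ℚ))
    (hG : IsReducedLexGB G (toricIdeal A)) :
    ∀ p ∈ G, ∀ i : Fin d, OnlyVarsFrom p i → SquareFreeIn p i :=
  squarefree_of_seqInterval_general A hseq G hG

end SIS
end

section
/- Let t ∈ ℤ₊^r and let M_{A,t} be a Markov subbasis for t such that π₁(m) ∈ {−1, 0, +1} for every m ∈ M_{A,t}. Then π₁(A⁻¹[t]) is an interval of integers. -/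
open Matrix MvPolynomial

namespace SIS

variable {r d : ℕ}

/-! Along a walk from `v` to `u` whose steps are moves of the subbasis, the first coordinate
changes by at most one per step, so it passes through every integer between `v 0` and `u 0`;
since the moves lie in `ker_ℤ(A)`, every point of the walk is again a table of `A⁻¹[t]`. -/

theorem _root_.Int.exists_eq_of_sub_one_le_succ {f : ℕ → ℤ} {N : ℕ}
    (hf : ∀ k < N, f k - 1 ≤ f (k + 1)) {c : ℤ} (hN : f N ≤ c) (h0 : c ≤ f 0) :
    ∃ k ≤ N, f k = c := by
  induction N with
  | zero => exact ⟨0, le_rfl, le_antisymm hN h0⟩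
  | succ N ih =>
    by_cases hc : f N ≤ c
    · obtain ⟨k, hk, hfk⟩ := ih (fun k hk => hf k (by omega)) hc
      exact ⟨k, by omega, hfk⟩
    · exact ⟨N + 1, le_rfl, by linarith [hf N N.lt_succ_self]⟩

theorem intMat_mulVec_natToInt (A : Matrix (Fin r) (Fin d) ℕ) (n : Fin d → ℕ) :
    intMat A *ᵥ natToInt n = natToInt (A *ᵥ n) := by
  funext i
  simp [mulVec, dotProduct, intMat, natToInt]

theorem mem_tables_of_natToInt_eq_add {A : Matrix (Fin r) (Fin d) ℕ} {t : Fin r → ℕ}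
    {n v : Fin d → ℕ} {m : Fin d → ℤ} (hv : v ∈ tables A t) (hm : m ∈ kerZ A)
    (h : natToInt n = natToInt v + m) : n ∈ tables A t := by
  refine natToInt_injective ?_
  rw [← intMat_mulVec_natToInt, h, mulVec_add, hm, add_zero, intMat_mulVec_natToInt]
  exact congrArg natToInt hv

/-- A connecting sequence of moves, read as the walk of its partial sums. -/
theorem connects.exists_walk {M : Set (Fin d → ℤ)} {u v : Fin d → ℕ} (h : connects M u v) :
    ∃ (N : ℕ) (p : ℕ → Fin d → ℕ), p 0 = v ∧ p N = u ∧
      ∀ k < N, natToInt (p (k + 1)) - natToInt (p k) ∈ M := by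
  obtain ⟨l, hlM, hsum, hnonneg⟩ := h
  let p : ℕ → Fin d → ℕ := fun k i => (natToInt v i + (l.take k).sum i).toNat
  have hp : ∀ k ≤ l.length, natToInt (p k) = natToInt v + (l.take k).sum := fun k hk =>
    funext fun i => Int.toNat_of_nonneg (hnonneg k hk i)
  refine ⟨l.length, p, natToInt_injective ?_, natToInt_injective ?_, fun k hk => ?_⟩
  · simpa using hp 0 (Nat.zero_le _)
  · rw [hp _ le_rfl, List.take_length, hsum]
  · rw [hp _ hk, hp _ hk.le, List.sum_take_succ l k hk, ← add_assoc, add_sub_cancel_left]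
    exact hlM _ (List.getElem_mem hk)

theorem walk_mem_tables {A : Matrix (Fin r) (Fin d) ℕ} {t : Fin r → ℕ} {N : ℕ}
    {p : ℕ → Fin d → ℕ} (h0 : p 0 ∈ tables A t)
    (hstep : ∀ k < N, natToInt (p (k + 1)) - natToInt (p k) ∈ kerZ A) :
    ∀ k ≤ N, p k ∈ tables A t := by
  intro k hk
  induction k with
  | zero => exact h0
  | succ k ih =>
    exact mem_tables_of_natToInt_eq_add (ih (by omega)) (hstep k hk)
      (add_sub_cancel _ _).symm

theorem firstCoords_interval_of_markovSubbasis_general {r d : ℕ} [NeZero d]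
    (A : Matrix (Fin r) (Fin d) ℕ) (t : Fin r → ℕ)
    (M : Set (Fin d → ℤ)) (hM : IsMarkovSubbasis A t M)
    (hpi : ∀ m ∈ M, m 0 = -1 ∨ m 0 = 0 ∨ m 0 = 1) :
    IsIntInterval {c : ℕ | ∃ n ∈ tables A t, n 0 = c} := by
  rintro _ ⟨u, hu, rfl⟩ _ ⟨v, hv, rfl⟩ c hac hcb
  obtain ⟨N, p, rfl, rfl, hstep⟩ := (hM.2.2 u hu v hv).exists_walk
  have hdesc : ∀ k < N, (p k 0 : ℤ) - 1 ≤ p (k + 1) 0 := fun k hk => by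
    have h := hpi _ (hstep k hk)
    simp only [Pi.sub_apply, natToInt] at h
    omega
  obtain ⟨k, hkN, hk⟩ := Int.exists_eq_of_sub_one_le_succ (f := fun k => (p k 0 : ℤ))
    (c := c) hdesc (by exact_mod_cast hac) (by exact_mod_cast hcb)
  exact ⟨p k, walk_mem_tables hv (fun k hk => hM.2.1 (hstep k hk)) k hkN, by exact_mod_cast hk⟩

/-- Lemma 4.1. If a Markov subbasis `M_{A,t}` satisfies
`π₁(M_{A,t}) ⊆ {-1, 0, +1}`, then `π₁(A⁻¹[t])` is an interval of integers. -/
theorem firstCoords_interval_of_markovSubbasis {r d : ℕ} [NeZero d]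
    (A : Matrix (Fin r) (Fin d) ℕ) (hA : RowsPos A) (t : Fin r → ℕ)
    (M : Set (Fin d → ℤ)) (hM : IsMarkovSubbasis A t M)
    (hpi : ∀ m ∈ M, m 0 = -1 ∨ m 0 = 0 ∨ m 0 = 1) :
    IsIntInterval {c : ℕ | ∃ n ∈ tables A t, n 0 = c} :=
  firstCoords_interval_of_markovSubbasis_general A t M hM hpi

end SIS
end

section
/- Let A₀ be an e×f matrix with entries in {0,1} and let A = (A₀ | I) be the e×(f+e) matrix obtained by appending the e×e identity matrix. Then for every y ∈ ℤ₊^e, the set A⁻¹[y] = {(x, z) ∈ ℤ₊^{f+e} : A₀x + z = y} has the sequential interval property with respect to the coordinate order x₁,…,x_f, z₁,…,z_e. -/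
open Matrix MvPolynomial

namespace SIS

variable {r d : ℕ}

/-- Example 7.6. For `A = (A₀ | I)` with `A₀` a 0/1 matrix,
the set `A⁻¹[y] = {(x, z) ∈ ℤ₊^{f+e} : A₀ x + z = y}` has the sequential
interval property (in the coordinate order `x₁, …, x_f, z₁, …, z_e`) for every
`y ∈ ℤ₊^e`. -/
theorem tomography_seqInterval (e f : ℕ) (A₀ : Matrix (Fin e) (Fin f) ℕ)
    (h01 : ∀ i j, A₀ i j ≤ 1)
    (A : Matrix (Fin e) (Fin (f + e)) ℕ)
    (hAdef : ∀ i j, A i j =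
      if h : (j : ℕ) < f then A₀ i ⟨(j : ℕ), h⟩
      else if (j : ℕ) = f + (i : ℕ) then 1 else 0)
    (y : Fin e → ℕ) :
    SeqIntervalProperty A y := by
  have key : ∀ n : Fin (f + e) → ℕ, ∀ i : Fin e,
      A.mulVec n i = (∑ j : Fin f, A₀ i j * n (Fin.castAdd e j)) + n (Fin.natAdd f i) := by
    intro n i
    simp only [Matrix.mulVec, dotProduct]
    rw [Fin.sum_univ_add]
    congr 1
    · refine Finset.sum_congr rfl fun j _ => ?_
      rw [hAdef]
      rw [dif_pos (show ((Fin.castAdd e j : Fin (f + e)) : ℕ) < f by simp)]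
      congr 1
    · rw [Finset.sum_eq_single i]
      · rw [hAdef, dif_neg (by simp), if_pos (by simp)]
        exact one_mul _
      · intro k _ hk
        rw [hAdef, dif_neg (by simp), if_neg (by simp [Fin.val_eq_val]; omega)]
        exact zero_mul _
      · intro h; exact absurd (Finset.mem_univ i) h
  intro i w a ha b hb c hac hcb
  obtain ⟨na, hna, hnaw, hnai⟩ := ha
  obtain ⟨nb, hnb, hnbw, hnbi⟩ := hb
  by_cases hif : (i : ℕ) < f
  · -- coordinate in the `x` block: downward closure via the slack variables
    set x' : Fin f → ℕ :=
      fun j => if (Fin.castAdd e j : Fin (f + e)) = i then c else nb (Fin.castAdd e j) with hx'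
    have hx'le : ∀ j, x' j ≤ nb (Fin.castAdd e j) := by
      intro j
      by_cases h : (Fin.castAdd e j : Fin (f + e)) = i
      · simp only [hx', if_pos h, h, hnbi]; exact hcb
      · simp [hx', h]
    have hsum : ∀ k : Fin e, ∑ j, A₀ k j * x' j ≤ y k := by
      intro k
      have h1 : ∑ j, A₀ k j * x' j ≤ ∑ j, A₀ k j * nb (Fin.castAdd e j) :=
        Finset.sum_le_sum fun j _ => Nat.mul_le_mul_left _ (hx'le j)
      have h2 : (∑ j, A₀ k j * nb (Fin.castAdd e j)) + nb (Fin.natAdd f k) = y k := by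
        rw [← key nb k]; exact congrFun hnb k
      omega
    refine ⟨Fin.append x' (fun k => y k - ∑ j, A₀ k j * x' j), ?_, ?_, ?_⟩
    · funext k
      rw [show (y : Fin e → ℕ) k = y k from rfl, key, Fin.append_right]
      have hs : (∑ j : Fin f, A₀ k j * Fin.append x'
            (fun k => y k - ∑ j, A₀ k j * x' j) (Fin.castAdd e j))
          = ∑ j, A₀ k j * x' j :=
        Finset.sum_congr rfl fun j _ => by rw [Fin.append_left]
      rw [hs]
      have := hsum k
      omega
    · intro j hj
      have hjf : (j : ℕ) < f := lt_of_lt_of_le hj hif.le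
      have hje : Fin.castAdd e ⟨(j : ℕ), hjf⟩ = j := rfl
      rw [← hje, Fin.append_left]
      have hne : (Fin.castAdd e ⟨(j : ℕ), hjf⟩ : Fin (f + e)) ≠ i := by
        rw [hje]; exact ne_of_lt hj
      simp only [hx', if_neg hne, hje]
      exact hnbw j hj
    · have hie : Fin.castAdd e ⟨(i : ℕ), hif⟩ = i := rfl
      rw [← hie, Fin.append_left]
      simp only [hx', if_pos hie]
  · -- coordinate in the `z` block: it is determined, so `a = b`
    have hfi : f ≤ (i : ℕ) := le_of_not_gt hif
    have hilt : (i : ℕ) < f + e := i.isLt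
    set k : Fin e := ⟨(i : ℕ) - f, by omega⟩ with hkdef
    have hk : Fin.natAdd f k = i := Fin.ext (by simp [hkdef]; omega)
    have hx : ∀ j : Fin f, na (Fin.castAdd e j) = nb (Fin.castAdd e j) := by
      intro j
      have hji : (Fin.castAdd e j : Fin (f + e)) < i := by
        rw [Fin.lt_def]; simp; omega
      rw [hnaw _ hji, hnbw _ hji]
    have e1 : (∑ j, A₀ k j * na (Fin.castAdd e j)) + na i = y k := by
      rw [← hk, ← key]; exact congrFun hna k
    have e2 : (∑ j, A₀ k j * nb (Fin.castAdd e j)) + nb i = y k := by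
      rw [← hk, ← key]; exact congrFun hnb k
    have hsums : (∑ j, A₀ k j * na (Fin.castAdd e j))
        = ∑ j, A₀ k j * nb (Fin.castAdd e j) :=
      Finset.sum_congr rfl fun j _ => by rw [hx]
    have hab : a = b := by rw [← hnai, ← hnbi]; omega
    have hca : c = a := by omega
    exact ⟨na, hna, hnaw, by omega⟩

end SIS
end
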